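/- arXiv:2505.02200 — 5 statements merged into one kernel-verified Lean document; each statement's English description precedes it below -/
import Mathlib

section
/- Every collectively order-to-topology bounded set of operators from an ordered vector space X to a topological vector space Y is collectively ru-to-topology continuous. That is, if T is a set of linear operators such that T[a,b] is topologically bounded for every order interval [a,b] in X, then for every net (x_α) in X relatively uniformly converging to 0, the family {T x_α : T ∈ T} converges to 0 in Y uniformly in T. -/
open Set Filter Bornology

/-- A net `x` in an ordered vector space relatively uniformly converges to `0`:
for some `u ≥ 0` there is an increasing sequence of indices `α n` with
`±x_a ≤ (1/n)u` (equivalently `±(n • x_a) ≤ u`) for all `a ≥ α n`. -/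
def RuConvZero {X : Type*} [AddCommGroup X] [PartialOrder X] [IsOrderedAddMonoid X]
    {ι : Type*} [Preorder ι] (x : ι → X) : Prop :=
  ∃ u : X, 0 ≤ u ∧ ∃ α : ℕ → ι, Monotone α ∧
    ∀ n : ℕ, ∀ a, α n ≤ a → n • x a ≤ u ∧ -u ≤ n • x a

/-- Every collectively order-to-topology bounded set of linear operators from an
ordered vector space to a topological vector space is collectively
ru-to-topology continuous. -/
theorem collectively_order_to_topology_bounded_implies_collectively_ru_to_topology_continuous
    {X Y : Type*} [AddCommGroup X] [PartialOrder X] [IsOrderedAddMonoid X] [Module ℝ X]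
    [AddCommGroup Y] [Module ℝ Y] [TopologicalSpace Y] [IsTopologicalAddGroup Y]
    [ContinuousSMul ℝ Y]
    (𝒯 : Set (X →ₗ[ℝ] Y))
    (hb : ∀ a b : X, IsVonNBounded ℝ (⋃ T ∈ 𝒯, T '' Icc a b))
    {ι : Type*} [Preorder ι] [IsDirected ι (· ≤ ·)] [Nonempty ι]
    (x : ι → X) (hx : RuConvZero x) :
    ∀ U ∈ nhds (0 : Y), ∃ a₀ : ι, ∀ a, a₀ ≤ a → ∀ T ∈ 𝒯, T (x a) ∈ U := by
  intro U hU
  obtain ⟨u, hu, α, hα, h⟩ := hx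
  obtain ⟨r, hr, habs⟩ := (hb (-u) u hU).exists_pos
  set n : ℕ := ⌈r⌉₊ + 1 with hn
  have hnr : r ≤ ‖((n : ℝ))‖ := by
    rw [Real.norm_natCast]
    exact (Nat.le_ceil r).trans (by exact_mod_cast Nat.le_succ _)
  have hn0 : (n : ℝ) ≠ 0 := by positivity
  refine ⟨α n, fun a ha T hT => ?_⟩
  have hmem : T (n • x a) ∈ ⋃ T ∈ 𝒯, T '' Icc (-u) u := by
    refine mem_iUnion₂.2 ⟨T, hT, ⟨n • x a, ⟨(h n a ha).2, (h n a ha).1⟩, rfl⟩⟩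
  have hsub := habs (n : ℝ) hnr hmem
  obtain ⟨y, hy, hyy⟩ := hsub
  have hyy' : (n : ℝ) • y = T (n • x a) := hyy
  have : (n : ℝ) • y = (n : ℝ) • T (x a) := by
    rw [hyy', ← Nat.cast_smul_eq_nsmul ℝ, map_smul]
  have hy' : y = T (x a) := smul_right_injective Y hn0 this
  rwa [← hy']
end

section
/- Every order-to-topology bounded linear operator from an ordered vector space X to a topological vector space (Y,τ) is ru-to-topology continuous: if T maps every order interval of X to a τ-bounded set, then T x_α → 0 in τ whenever x_α ru-converges to 0 in X. -/
open Set Filter Bornology Pointwise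

/-- Every order-to-topology bounded linear operator from an ordered vector
space to a topological vector space is ru-to-topology continuous. -/
theorem order_to_topology_bounded_implies_ru_to_topology_continuous
    {X Y : Type*} [AddCommGroup X] [PartialOrder X] [IsOrderedAddMonoid X] [Module ℝ X]
    [AddCommGroup Y] [Module ℝ Y] [TopologicalSpace Y] [IsTopologicalAddGroup Y]
    [ContinuousSMul ℝ Y]
    (T : X →ₗ[ℝ] Y)
    (hb : ∀ a b : X, IsVonNBounded ℝ (T '' Icc a b))
    {ι : Type*} [Preorder ι] [IsDirected ι (· ≤ ·)] [Nonempty ι]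
    (x : ι → X) (hx : RuConvZero x) :
    Tendsto (fun a => T (x a)) atTop (nhds 0) := by
  obtain ⟨u, hu, α, hmono, hα⟩ := hx
  rw [tendsto_def]
  intro V hV
  obtain ⟨r, hr⟩ := (absorbs_iff_norm).mp (hb (-u) u hV)
  set n : ℕ := max 1 ⌈r⌉₊ with hn
  have hnr : r ≤ ‖(n : ℝ)‖ := by
    rw [Real.norm_natCast]
    exact le_trans (Nat.le_ceil r) (by exact_mod_cast le_max_right 1 ⌈r⌉₊)
  have hsub := hr (n : ℝ) hnr
  have hne : (n : ℝ) ≠ 0 := by positivity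
  filter_upwards [Filter.eventually_ge_atTop (α n)] with a ha
  have hmem : n • x a ∈ Icc (-u) u := ⟨(hα n a ha).2, (hα n a ha).1⟩
  have : T (n • x a) ∈ (n : ℝ) • V := hsub (Set.mem_image_of_mem T hmem)
  rw [← Nat.cast_smul_eq_nsmul ℝ, T.map_smul] at this
  simpa using (smul_mem_smul_set_iff₀ hne V _).mp this
end

section
/- Let X be an Archimedean ordered vector space with generating positive cone and (Y,τ) a topological vector space. Then every collectively order-to-topology continuous set of linear operators from X to Y is collectively order-to-topology bounded. -/
open Set Filter Bornology Pointwise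

/-- Order convergence of a net to `0`: there is a decreasing net `g_β ↓ 0`
(encoded by its downward directed range `D` with infimum `0`) such that for
each `g ∈ D` eventually `±x_a ≤ g`. -/
def OConvZero {X : Type*} [AddCommGroup X] [PartialOrder X] [IsOrderedAddMonoid X]
    {ι : Type*} [Preorder ι] (x : ι → X) : Prop :=
  ∃ D : Set X, D.Nonempty ∧ DirectedOn (· ≥ ·) D ∧ IsGLB D 0 ∧
    ∀ g ∈ D, ∃ a₀ : ι, ∀ a, a₀ ≤ a → x a ≤ g ∧ -g ≤ x a

/-- A set of operators is collectively order-to-topology continuous if for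
every net order converging to `0` the images converge to `0` uniformly. -/
def CollOTauCont {X Y : Type*} [AddCommGroup X] [PartialOrder X] [IsOrderedAddMonoid X] [Module ℝ X]
    [AddCommGroup Y] [Module ℝ Y] [TopologicalSpace Y]
    (𝒯 : Set (X →ₗ[ℝ] Y)) : Prop :=
  ∀ (ι : Type) [Preorder ι] [IsDirected ι (· ≤ ·)] [Nonempty ι] (x : ι → X),
    OConvZero x →
      ∀ U ∈ nhds (0 : Y), ∃ a₀ : ι, ∀ a, a₀ ≤ a → ∀ T ∈ 𝒯, T (x a) ∈ U

/-- In an Archimedean ordered group with generating cone, if `N • v ≥ 0` for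
some `N > 0`, then `v ≥ 0`. -/
lemma aux_nonneg_of_nsmul_nonneg {X : Type*} [AddCommGroup X] [PartialOrder X] [IsOrderedAddMonoid X]
    (harch : ∀ x y : X, (∀ n : ℕ, n • x ≤ y) → x ≤ 0)
    (hgen : ∀ x : X, ∃ y z : X, 0 ≤ y ∧ 0 ≤ z ∧ x = y - z)
    {v : X} {N : ℕ} (hN : 0 < N) (h : 0 ≤ N • v) : 0 ≤ v := by
  have hub : ∀ x : X, ∃ y, x ≤ y ∧ 0 ≤ y := by
    intro x
    obtain ⟨y, z, hy, hz, hx⟩ := hgen x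
    exact ⟨y, by rw [hx]; simpa using sub_le_self y hz, hy⟩
  -- upper bound for all `r • (-v)`, `r ≤ N`
  have hfin : ∀ M : ℕ, ∃ y : X, 0 ≤ y ∧ ∀ r ≤ M, r • (-v) ≤ y := by
    intro M
    induction M with
    | zero => exact ⟨0, le_refl 0, fun r hr => by simp [Nat.le_zero.mp hr]⟩
    | succ M ih =>
      obtain ⟨y, hy0, hy⟩ := ih
      obtain ⟨y', hy', h0'⟩ := hub ((M + 1) • (-v))
      refine ⟨y + y', add_nonneg hy0 h0', fun r hr => ?_⟩
      rcases Nat.lt_succ_iff_lt_or_eq.mp (Nat.lt_succ_of_le hr) with hrM | hrM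
      · exact (hy r (Nat.lt_succ_iff.mp hrM)).trans (le_add_of_nonneg_right h0')
      · rw [hrM]; exact hy'.trans (le_add_of_nonneg_left hy0)
  obtain ⟨y, _, hy⟩ := hfin N
  have hkey : ∀ k : ℕ, k • (-v) ≤ y := by
    intro k
    have hdecomp : k = N * (k / N) + k % N := (Nat.div_add_mod k N).symm
    calc k • (-v) = (N * (k / N)) • (-v) + (k % N) • (-v) := by
          rw [← add_nsmul, ← hdecomp]
      _ ≤ 0 + y := by
          refine add_le_add ?_ (hy _ (le_of_lt (Nat.mod_lt k hN)))
          have heq : (N * (k / N)) • (-v) = (k / N) • (N • (-v)) := by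
            rw [← mul_nsmul']; congr 1; ring
          rw [heq, neg_nsmul]
          exact nsmul_nonpos (neg_nonpos.mpr h) _
      _ = y := zero_add y
  have := harch (-v) y hkey
  simpa using neg_nonpos.mp this

/-- For an Archimedean ordered vector space with generating cone, every
collectively order-to-topology continuous set of linear operators into a
topological vector space is collectively order-to-topology bounded. -/
theorem collOTauCont_implies_collOTauBounded
    {X Y : Type*} [AddCommGroup X] [PartialOrder X] [IsOrderedAddMonoid X] [Module ℝ X]
    [AddCommGroup Y] [Module ℝ Y] [TopologicalSpace Y] [IsTopologicalAddGroup Y]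
    [ContinuousSMul ℝ Y]
    (harch : ∀ x y : X, (∀ n : ℕ, n • x ≤ y) → x ≤ 0)
    (hgen : ∀ x : X, ∃ y z : X, 0 ≤ y ∧ 0 ≤ z ∧ x = y - z)
    (𝒯 : Set (X →ₗ[ℝ] Y)) (hc : CollOTauCont 𝒯) :
    ∀ a b : X, IsVonNBounded ℝ (⋃ T ∈ 𝒯, T '' Icc a b) := by
  intro a b
  have key : ∀ {v : X} {N : ℕ}, 0 < N → 0 ≤ N • v → 0 ≤ v :=
    fun hN h => aux_nonneg_of_nsmul_nonneg harch hgen hN h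
  have hub : ∀ x : X, ∃ y, x ≤ y ∧ 0 ≤ y := by
    intro x
    obtain ⟨y, z, hy, hz, hx⟩ := hgen x
    exact ⟨y, by rw [hx]; simpa using sub_le_self y hz, hy⟩
  obtain ⟨g1, hbg1, hg1⟩ := hub b
  obtain ⟨g2, hag2, hg2⟩ := hub (-a)
  set g : X := g1 + g2 with hgdef
  have hg0 : 0 ≤ g := add_nonneg hg1 hg2
  have hbg : b ≤ g := hbg1.trans (le_add_of_nonneg_right hg2)
  have hag : -g ≤ a := by
    have h : -a ≤ g := hag2.trans (le_add_of_nonneg_left hg1)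
    exact neg_le.mp h
  -- the decreasing net `g / (m+1)`
  set w : ℕ → X := fun m => ((m : ℝ) + 1)⁻¹ • g with hwdef
  have hcast : ∀ (m : ℕ) (x : X), ((m : ℝ) + 1) • x = (m + 1) • x := by
    intro m x
    rw [← Nat.cast_smul_eq_nsmul ℝ (m + 1) x]
    push_cast
    ring_nf
  have hwsmul : ∀ m : ℕ, (m + 1) • w m = g := by
    intro m
    rw [← hcast m (w m), hwdef]
    rw [smul_smul, mul_inv_cancel₀ (by positivity), one_smul]
  have hw0 : ∀ m : ℕ, 0 ≤ w m := by
    intro m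
    exact key (Nat.succ_pos m) (by rw [hwsmul m]; exact hg0)
  have hwmono : ∀ m n : ℕ, m ≤ n → w n ≤ w m := by
    intro m n hmn
    rw [← sub_nonneg]
    refine key (N := (m + 1) * (n + 1)) (by positivity) ?_
    have h1 : ((m + 1) * (n + 1)) • (w m - w n) =
        (n + 1) • ((m + 1) • w m) - (m + 1) • ((n + 1) • w n) := by
      rw [smul_sub, smul_smul, smul_smul]
      congr 2 <;> ring
    rw [h1, hwsmul, hwsmul, sub_nonneg]
    exact nsmul_le_nsmul_left hg0 (by omega)
  have hdir : DirectedOn (· ≥ ·) (range w) := by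
    rintro _ ⟨m, rfl⟩ _ ⟨n, rfl⟩
    exact ⟨w (max m n), mem_range_self _, hwmono m _ (le_max_left m n),
      hwmono n _ (le_max_right m n)⟩
  have hglb : IsGLB (range w) 0 := by
    constructor
    · rintro _ ⟨m, rfl⟩; exact hw0 m
    · intro c hcb
      refine harch c g fun k => ?_
      cases k with
      | zero => simpa using hg0
      | succ k =>
        calc (k + 1) • c ≤ (k + 1) • w k :=
              nsmul_le_nsmul_right (hcb (mem_range_self k)) _
          _ = g := hwsmul k
  -- domination of scaled interval elements
  have hdom : ∀ (u : X), u ∈ Icc a b → ∀ m n : ℕ, m ≤ n →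
      ((n : ℝ) + 1)⁻¹ • u ≤ w m ∧ -(w m) ≤ ((n : ℝ) + 1)⁻¹ • u := by
    intro u hu m n hmn
    set v : X := ((n : ℝ) + 1)⁻¹ • u with hvdef
    have hv : (n + 1) • v = u := by
      rw [← hcast n v, hvdef, smul_smul, mul_inv_cancel₀ (by positivity), one_smul]
    have hug : u ≤ g := hu.2.trans hbg
    have hgu : -g ≤ u := hag.trans hu.1
    constructor
    · rw [← sub_nonneg]
      refine key (N := (m + 1) * (n + 1)) (by positivity) ?_
      have h1 : ((m + 1) * (n + 1)) • (w m - v) =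
          (n + 1) • ((m + 1) • w m) - (m + 1) • ((n + 1) • v) := by
        rw [smul_sub, smul_smul, smul_smul]
        congr 2 <;> ring
      rw [h1, hwsmul, hv, sub_nonneg]
      calc (m + 1) • u ≤ (m + 1) • g := nsmul_le_nsmul_right hug _
        _ ≤ (n + 1) • g := nsmul_le_nsmul_left hg0 (by omega)
    · rw [neg_le, ← sub_nonneg, sub_neg_eq_add]
      refine key (N := (m + 1) * (n + 1)) (by positivity) ?_
      have h1 : ((m + 1) * (n + 1)) • (w m + v) =
          (n + 1) • ((m + 1) • w m) + (m + 1) • ((n + 1) • v) := by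
        rw [smul_add]
        congr 1
        · rw [← mul_nsmul']; congr 1; ring
        · rw [← mul_nsmul']
      rw [h1, hwsmul, hv]
      have h2 : (m + 1) • (-g) ≤ (m + 1) • u := nsmul_le_nsmul_right hgu _
      have h3 : (m + 1) • g ≤ (n + 1) • g := nsmul_le_nsmul_left hg0 (by omega)
      have : (0 : X) ≤ (m + 1) • u + (m + 1) • g := by
        have := add_le_add h2 (le_refl ((m + 1) • g))
        simpa [neg_nsmul] using this
      calc (0 : X) ≤ (m + 1) • g + (m + 1) • u := by
            rw [add_comm]; exact this
        _ ≤ (n + 1) • g + (m + 1) • u := add_le_add_left h3 _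
  -- main argument
  intro V hV
  set W : Set Y := balancedCore ℝ V with hWdef
  have hW : W ∈ nhds (0 : Y) := balancedCore_mem_nhds_zero hV
  have hWb : Balanced ℝ W := balancedCore_balanced V
  have hkey : ∃ n : ℕ, ∀ T ∈ 𝒯, ∀ u ∈ Icc a b, ((n : ℝ) + 1)⁻¹ • T u ∈ W := by
    by_contra hcon
    push_neg at hcon
    choose T hT u hu hTu using hcon
    set x : ℕ → X := fun n => ((n : ℝ) + 1)⁻¹ • u n with hxdef
    have hx : OConvZero x := by
      refine ⟨range w, ⟨w 0, mem_range_self 0⟩, hdir, hglb, ?_⟩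
      rintro _ ⟨m, rfl⟩
      exact ⟨m, fun n hn => hdom (u n) (hu n) m n hn⟩
    obtain ⟨n₀, hn₀⟩ := hc ℕ x hx W hW
    have h1 := hn₀ n₀ le_rfl (T n₀) (hT n₀)
    have h2 : (T n₀) (x n₀) = ((n₀ : ℝ) + 1)⁻¹ • (T n₀) (u n₀) := by
      rw [hxdef]; exact map_smul _ _ _
    exact hTu n₀ (h2 ▸ h1)
  obtain ⟨n, hn⟩ := hkey
  rw [absorbs_iff_norm]
  refine ⟨(n : ℝ) + 1, fun c hc' => ?_⟩
  have hsub : (⋃ T ∈ 𝒯, T '' Icc a b) ⊆ (((n : ℝ) + 1) • W : Set Y) := by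
    rintro y hy
    simp only [mem_iUnion, mem_image] at hy
    obtain ⟨T, hT, u, hu, rfl⟩ := hy
    refine ⟨((n : ℝ) + 1)⁻¹ • T u, hn T hT u hu, ?_⟩
    show ((n : ℝ) + 1) • (((n : ℝ) + 1)⁻¹ • T u) = T u
    rw [smul_smul, mul_inv_cancel₀ (by positivity), one_smul]
  refine hsub.trans ?_
  refine (hWb.smul_mono ?_).trans (smul_set_mono (balancedCore_subset V))
  have : ‖(n : ℝ) + 1‖ = (n : ℝ) + 1 := by
    rw [Real.norm_eq_abs, abs_of_nonneg (by positivity)]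
  rw [this]; exact hc'
end

section
/- Every order-to-topology continuous linear operator from an Archimedean ordered vector space with a generating cone to a topological vector space is order-to-topology bounded. -/
open Set Filter Bornology

/-- In an Archimedean ordered group with generating cone, `0 ≤ n • y` for some
positive `n` implies `0 ≤ y`. -/
lemma nsmul_nonneg_cancel {X : Type*} [AddCommGroup X] [PartialOrder X] [IsOrderedAddMonoid X]
    (harch : ∀ x y : X, (∀ n : ℕ, n • x ≤ y) → x ≤ 0)
    (hgen : ∀ x : X, ∃ y z : X, 0 ≤ y ∧ 0 ≤ z ∧ x = y - z)
    {y : X} {n : ℕ} (hn : 0 < n) (h : 0 ≤ n • y) : 0 ≤ y := by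
  have hub : ∀ x : X, ∃ p : X, 0 ≤ p ∧ x ≤ p := by
    intro x
    obtain ⟨p, q, hp, hq, hx⟩ := hgen x
    exact ⟨p, hp, by rw [hx]; exact sub_le_self p hq⟩
  set z := -y with hz
  have hnz : n • z ≤ 0 := by
    rw [hz, smul_neg, neg_nonpos]; exact h
  have hfin : ∀ m : ℕ, ∃ w : X, 0 ≤ w ∧ ∀ r : ℕ, r < m → r • z ≤ w := by
    intro m
    induction m with
    | zero => exact ⟨0, le_refl 0, fun r hr => absurd hr (Nat.not_lt_zero r)⟩
    | succ m ih =>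
      obtain ⟨w, hw0, hw⟩ := ih
      obtain ⟨p, hp0, hp⟩ := hub (m • z)
      refine ⟨w + p, add_nonneg hw0 hp0, fun r hr => ?_⟩
      rcases Nat.lt_succ_iff_lt_or_eq.mp hr with h' | h'
      · exact le_trans (hw r h') (le_add_of_nonneg_right hp0)
      · subst h'; exact le_trans hp (le_add_of_nonneg_left hw0)
  obtain ⟨w, hw0, hw⟩ := hfin n
  have hbound : ∀ m : ℕ, m • z ≤ w := by
    intro m
    have hmod : n * (m / n) + m % n = m := Nat.div_add_mod m n
    have hrw : m • z = (m / n) • (n • z) + (m % n) • z := by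
      rw [← mul_smul, ← add_smul]
      congr 1
      exact (Nat.div_add_mod' m n).symm
    rw [hrw]
    calc (m / n) • (n • z) + (m % n) • z
        ≤ 0 + w := add_le_add (nsmul_nonpos hnz _) (hw _ (Nat.mod_lt m hn))
      _ = w := zero_add w
  have hfin := harch z w hbound
  rw [hz, neg_nonpos] at hfin
  exact hfin

/-- Every order-to-topology continuous linear operator from an Archimedean
ordered vector space with generating cone to a topological vector space is
order-to-topology bounded. -/
theorem order_to_topology_continuous_implies_order_to_topology_bounded
    {X Y : Type*} [AddCommGroup X] [PartialOrder X] [IsOrderedAddMonoid X] [Module ℝ X]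
    [AddCommGroup Y] [Module ℝ Y] [TopologicalSpace Y] [IsTopologicalAddGroup Y]
    [ContinuousSMul ℝ Y]
    (harch : ∀ x y : X, (∀ n : ℕ, n • x ≤ y) → x ≤ 0)
    (hgen : ∀ x : X, ∃ y z : X, 0 ≤ y ∧ 0 ≤ z ∧ x = y - z)
    (T : X →ₗ[ℝ] Y)
    (hc : ∀ (ι : Type) [Preorder ι] [IsDirected ι (· ≤ ·)] [Nonempty ι]
      (x : ι → X), OConvZero x → Tendsto (fun a => T (x a)) atTop (nhds 0)) :
    ∀ a b : X, IsVonNBounded ℝ (T '' Icc a b) := by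
  intro a b
  -- find c ≥ 0 with Icc a b ⊆ Icc (-c) c
  obtain ⟨p₁, q₁, hp₁, hq₁, hb⟩ := hgen b
  obtain ⟨p₂, q₂, hp₂, hq₂, ha⟩ := hgen (-a)
  set c : X := p₁ + p₂ with hc_def
  have hc0 : 0 ≤ c := add_nonneg hp₁ hp₂
  have hbc : b ≤ c := by
    rw [hb]
    calc p₁ - q₁ ≤ p₁ := sub_le_self p₁ hq₁
      _ ≤ p₁ + p₂ := le_add_of_nonneg_right hp₂
  have hac : -c ≤ a := by
    rw [neg_le, ha]
    calc p₂ - q₂ ≤ p₂ := sub_le_self p₂ hq₂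
      _ ≤ p₁ + p₂ := le_add_of_nonneg_left hp₁
  -- key comparison
  have key : ∀ (u : X), -c ≤ u → u ≤ c → ∀ k n : ℕ, k ≤ n →
      ((n : ℝ) + 1)⁻¹ • u ≤ ((k : ℝ) + 1)⁻¹ • c ∧
      -(((k : ℝ) + 1)⁻¹ • c) ≤ ((n : ℝ) + 1)⁻¹ • u := by
    intro u hu1 hu2 k n hkn
    have hMnat : (((k + 1) * (n + 1) : ℕ) : ℝ) = ((k : ℝ) + 1) * ((n : ℝ) + 1) := by
      push_cast; ring
    have hMpos : 0 < (k + 1) * (n + 1) := Nat.mul_pos (Nat.succ_pos k) (Nat.succ_pos n)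
    have scale : ∀ (v : X), 0 ≤ ((k + 1) * (n + 1)) • v → 0 ≤ v := fun v hv =>
      nsmul_nonneg_cancel harch hgen hMpos hv
    have hsmul : ∀ (v : X) (r : ℝ),
        ((k + 1) * (n + 1)) • (r • v) = ((((k : ℝ) + 1) * ((n : ℝ) + 1)) * r) • v := by
      intro v r
      rw [← Nat.cast_smul_eq_nsmul ℝ ((k + 1) * (n + 1)), smul_smul, hMnat]
    have hinvk : (((k : ℝ) + 1) * ((n : ℝ) + 1)) * ((k : ℝ) + 1)⁻¹ = ((n : ℝ) + 1) := by
      have : ((k : ℝ) + 1) ≠ 0 := by positivity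
      field_simp
    have hinvn : (((k : ℝ) + 1) * ((n : ℝ) + 1)) * ((n : ℝ) + 1)⁻¹ = ((k : ℝ) + 1) := by
      have : ((n : ℝ) + 1) ≠ 0 := by positivity
      field_simp
    have hknc : (k + 1) • u ≤ (n + 1) • c := by
      calc (k + 1) • u ≤ (k + 1) • c := nsmul_le_nsmul_right hu2 (k + 1)
        _ ≤ (n + 1) • c := nsmul_le_nsmul_left hc0 (by omega)
    have h1 : -((k + 1) • c) ≤ (k + 1) • u := by
      have h2 := nsmul_le_nsmul_right hu1 (k + 1)
      rwa [smul_neg] at h2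
    constructor
    · rw [← sub_nonneg]
      apply scale
      rw [smul_sub, hsmul, hsmul, hinvk, hinvn, sub_nonneg,
        ← Nat.cast_add_one, ← Nat.cast_add_one,
        Nat.cast_smul_eq_nsmul, Nat.cast_smul_eq_nsmul]
      exact hknc
    · rw [neg_le, ← sub_nonneg, sub_neg_eq_add]
      apply scale
      rw [smul_add, hsmul, hsmul, hinvk, hinvn,
        ← Nat.cast_add_one, ← Nat.cast_add_one,
        Nat.cast_smul_eq_nsmul, Nat.cast_smul_eq_nsmul]
      calc (0:X) ≤ (n + 1) • c - (k + 1) • c :=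
            sub_nonneg.mpr (nsmul_le_nsmul_left hc0 (by omega))
        _ = (n + 1) • c + -((k + 1) • c) := by rw [sub_eq_add_neg]
        _ ≤ (n + 1) • c + (k + 1) • u := add_le_add_right h1 _
  -- nonnegativity of the guards
  have hg0 : ∀ k : ℕ, 0 ≤ ((k : ℝ) + 1)⁻¹ • c := by
    intro k
    have := (key c (le_trans (neg_nonpos.mpr hc0) hc0) (le_refl c) k k (le_refl k)).2
    have h0 := (key c (le_trans (neg_nonpos.mpr hc0) hc0) (le_refl c) k k (le_refl k)).1
    -- direct proof instead:
    apply nsmul_nonneg_cancel harch hgen (Nat.succ_pos k)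
    have : (k + 1) • (((k : ℝ) + 1)⁻¹ • c) = c := by
      rw [← Nat.cast_smul_eq_nsmul ℝ (k + 1), smul_smul]
      push_cast
      rw [mul_inv_cancel₀ (by positivity : ((k : ℝ) + 1) ≠ 0), one_smul]
    rw [this]
    exact hc0
  -- apply the boundedness criterion with ε n = (n+1)⁻¹
  apply isVonNBounded_of_smul_tendsto_zero (ε := fun n : ℕ => ((n : ℝ) + 1)⁻¹)
    (l := atTop)
  · exact Eventually.of_forall fun n => by positivity
  · intro y hy
    -- choose preimages
    choose u hu hTu using fun n => hy n
    have hu1 : ∀ n, -c ≤ u n := fun n => le_trans hac (hu n).1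
    have hu2 : ∀ n, u n ≤ c := fun n => le_trans (hu n).2 hbc
    set x : ℕ → X := fun n => ((n : ℝ) + 1)⁻¹ • u n with hx_def
    have hoc : OConvZero x := by
      refine ⟨Set.range (fun k : ℕ => ((k : ℝ) + 1)⁻¹ • c), ⟨_, ⟨0, rfl⟩⟩, ?_, ?_, ?_⟩
      · rintro _ ⟨k, rfl⟩ _ ⟨l, rfl⟩
        refine ⟨(((max k l : ℕ) : ℝ) + 1)⁻¹ • c, ⟨max k l, rfl⟩, ?_, ?_⟩
        · exact (key c (le_trans (neg_nonpos.mpr hc0) hc0) (le_refl c)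
            k (max k l) (le_max_left k l)).1
        · exact (key c (le_trans (neg_nonpos.mpr hc0) hc0) (le_refl c)
            l (max k l) (le_max_right k l)).1
      · constructor
        · rintro _ ⟨k, rfl⟩
          exact hg0 k
        · intro w hw
          apply harch w c
          intro m
          rcases Nat.eq_zero_or_pos m with hm | hm
          · subst hm; simpa using hc0
          · have hcast : ((m - 1 : ℕ) : ℝ) + 1 = (m : ℝ) := by
              rw [← Nat.cast_add_one, Nat.sub_add_cancel hm]
            have hwle : w ≤ (((m - 1 : ℕ) : ℝ) + 1)⁻¹ • c := hw ⟨m - 1, rfl⟩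
            calc m • w ≤ m • ((((m - 1 : ℕ) : ℝ) + 1)⁻¹ • c) :=
                  nsmul_le_nsmul_right hwle m
              _ = c := by
                  rw [hcast, ← Nat.cast_smul_eq_nsmul ℝ m, smul_smul,
                    mul_inv_cancel₀ (by exact_mod_cast hm.ne' : (m : ℝ) ≠ 0), one_smul]
      · rintro _ ⟨k, rfl⟩
        exact ⟨k, fun n hn => ⟨(key (u n) (hu1 n) (hu2 n) k n hn).1,
          (key (u n) (hu1 n) (hu2 n) k n hn).2⟩⟩
    have := hc ℕ x hoc
    have heq : (fun n : ℕ => ((n : ℝ) + 1)⁻¹ • y n) = fun n => T (x n) := by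
      funext n
      rw [hx_def]
      simp only [map_smul]
      rw [hTu n]
    have hfinal : Tendsto (fun n : ℕ => ((n : ℝ) + 1)⁻¹ • y n) atTop (nhds 0) := by
      rw [heq]; exact this
    exact hfinal
end

section
/- There exists a linear operator T on c₀₀ (the space of finitely supported real sequences with the sup norm and coordinatewise order), namely T x = (∑_k x_k)·e₁, that is order-to-norm bounded but not norm bounded. Hence norm completeness of the domain is essential for automatic boundedness of order-to-norm bounded operators. -/
open Set

/-- The supremum norm on the space `c₀₀ = ℕ →₀ ℝ` of finitely supported
real sequences. -/
noncomputable def supNorm (x : ℕ →₀ ℝ) : ℝ := ⨆ k : ℕ, |x k|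

lemma supNorm_single_zero (c : ℝ) : supNorm (Finsupp.single 0 c) = |c| := by
  unfold supNorm
  apply le_antisymm
  · apply ciSup_le
    intro k
    rcases eq_or_ne k 0 with h | h
    · simp [h]
    · simp [Finsupp.single_apply, Ne.symm h]
  · have hb : BddAbove (Set.range fun k : ℕ => |(Finsupp.single 0 c : ℕ →₀ ℝ) k|) := by
      refine ⟨|c|, ?_⟩
      rintro y ⟨k, rfl⟩
      show |(Finsupp.single 0 c : ℕ →₀ ℝ) k| ≤ |c|
      rcases eq_or_ne k 0 with h | h
      · simp [h]
      · simp [Finsupp.single_apply, Ne.symm h]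
    have := le_ciSup hb 0
    simpa using this

/-- The operator `T x = (∑ₖ x_k) • e₁` on `c₀₀` (finitely supported sequences
with the coordinatewise order and the sup norm) is order-to-norm bounded but
not norm bounded. -/
theorem exists_order_to_norm_bounded_not_bounded_on_c00 :
    ∃ T : (ℕ →₀ ℝ) →ₗ[ℝ] (ℕ →₀ ℝ),
      (∀ x : ℕ →₀ ℝ, T x = Finsupp.single 0 (x.sum fun _ v => v)) ∧
      (∀ a b : ℕ →₀ ℝ, ∃ M : ℝ, ∀ x ∈ Icc a b, supNorm (T x) ≤ M) ∧
      ¬ (∃ C : ℝ, ∀ x : ℕ →₀ ℝ, supNorm (T x) ≤ C * supNorm x) := by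
  refine ⟨(Finsupp.lsingle 0).comp (Finsupp.lsum ℝ fun _ => LinearMap.id), fun x => rfl,
    ?_, ?_⟩
  · intro a b
    refine ⟨∑ k ∈ a.support ∪ b.support, (|a k| + |b k|), ?_⟩
    rintro x ⟨hax, hxb⟩
    have hsupp : x.support ⊆ a.support ∪ b.support := by
      intro k hk
      by_contra h
      simp only [Finset.mem_union, Finsupp.mem_support_iff, not_or, not_not] at h
      have h1 := hax k
      have h2 := hxb k
      rw [h.1] at h1; rw [h.2] at h2
      exact Finsupp.mem_support_iff.mp hk (le_antisymm h2 h1)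
    have hsum : (x.sum fun _ v => v) = ∑ k ∈ a.support ∪ b.support, x k :=
      Finsupp.sum_of_support_subset x hsupp _ (fun _ _ => rfl)
    have hTx : supNorm ((((Finsupp.lsingle 0).comp
        (Finsupp.lsum ℝ fun _ => LinearMap.id)) : (ℕ →₀ ℝ) →ₗ[ℝ] (ℕ →₀ ℝ)) x)
        = |x.sum fun _ v => v| := supNorm_single_zero _
    rw [hTx, hsum]
    calc |∑ k ∈ a.support ∪ b.support, x k|
        ≤ ∑ k ∈ a.support ∪ b.support, |x k| := Finset.abs_sum_le_sum_abs _ _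
      _ ≤ ∑ k ∈ a.support ∪ b.support, (|a k| + |b k|) := by
          apply Finset.sum_le_sum
          intro k _
          have h1 := hax k
          have h2 := hxb k
          rw [abs_le]
          constructor
          · calc -(|a k| + |b k|) ≤ -|a k| := by linarith [abs_nonneg (b k)]
              _ ≤ a k := neg_abs_le _
              _ ≤ x k := h1
          · calc x k ≤ b k := h2
              _ ≤ |b k| := le_abs_self _
              _ ≤ |a k| + |b k| := by linarith [abs_nonneg (a k)]
  · rintro ⟨C, hC⟩
    set n : ℕ := ⌈C⌉₊ + 1 with hn
    set x : ℕ →₀ ℝ := ∑ k ∈ Finset.range n, Finsupp.single k 1 with hx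
    have hTx : (((Finsupp.lsingle 0).comp
        (Finsupp.lsum ℝ fun _ => LinearMap.id)) : (ℕ →₀ ℝ) →ₗ[ℝ] (ℕ →₀ ℝ)) x
        = Finsupp.single 0 (n : ℝ) := by
      rw [hx, map_sum]
      have : ∀ k : ℕ, (((Finsupp.lsingle 0).comp
          (Finsupp.lsum ℝ fun _ => LinearMap.id)) : (ℕ →₀ ℝ) →ₗ[ℝ] (ℕ →₀ ℝ))
          (Finsupp.single k 1) = Finsupp.single 0 (1 : ℝ) := by
        intro k
        simp [Finsupp.sum_single_index]
      simp only [this]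
      rw [Finset.sum_const, Finset.card_range]
      ext j
      simp [Finsupp.single_apply]
    have hxk : ∀ k : ℕ, x k = if k < n then 1 else 0 := by
      intro k
      rw [hx]
      rw [Finset.sum_apply']
      simp [Finsupp.single_apply, Finset.sum_ite_eq]
    have hsup : supNorm x = 1 := by
      unfold supNorm
      apply le_antisymm
      · apply ciSup_le
        intro k
        rw [hxk k]
        split <;> simp
      · have hb : BddAbove (Set.range fun k : ℕ => |x k|) := by
          refine ⟨1, ?_⟩
          rintro y ⟨k, rfl⟩
          show |x k| ≤ 1
          rw [hxk k]; split <;> simp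
        have := le_ciSup hb 0
        rw [hxk 0] at this
        simpa [hn] using this
    have hkey := hC x
    rw [hTx, supNorm_single_zero, hsup, mul_one] at hkey
    have : (n : ℝ) ≤ C := by
      rwa [abs_of_nonneg (by positivity)] at hkey
    have hC' : C < n := by
      calc C ≤ ⌈C⌉₊ := Nat.le_ceil C
        _ < n := by exact_mod_cast Nat.lt_succ_self _
    linarith
end
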